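/- Let α>0 and 0<θ<α. Then H_α(x)=∫_{[0,x]} y^α dF(y) is regularly varying with index θ at infinity if and only if 1−F(x) is regularly varying with index θ−α at infinity. Moreover, either condition implies x^α(1−F(x))/H_α(x) → θ/(α−θ). -/

import Mathlib

open MeasureTheory Set Filter Topology

/-- The cumulative distribution function of a measure `μ` on `ℝ`. -/
noncomputable def distF (μ : Measure ℝ) (x : ℝ) : ℝ := (μ (Iic x)).toReal

/-- Truncated `α`-th moment `H_α(x) = ∫_{[0,x]} y^α dF(y)`. -/
noncomputable def Htr (μ : Measure ℝ) (α x : ℝ) : ℝ := ∫ y in Iic x, y ^ α ∂μ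

/-- `W_α(x) = ∫_0^x y^(α-1) (1 - F(y)) dy` (Lebesgue integral). -/
noncomputable def Wtr (μ : Measure ℝ) (α x : ℝ) : ℝ :=
  ∫ y in Ioc (0:ℝ) x, y ^ (α - 1) * (1 - distF μ y)

/-- The Williamson transform `G_α(x) = ∫_{[0,x]} (1 - (t/x)^α) dF(t)`. -/
noncomputable def Gw (μ : Measure ℝ) (α x : ℝ) : ℝ := ∫ t in Iic x, (1 - (t / x) ^ α) ∂μ

/-- `g` is regularly varying at infinity with index `ρ`. -/
def RegVary (g : ℝ → ℝ) (ρ : ℝ) : Prop :=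
  ∀ t : ℝ, 0 < t → Tendsto (fun x => g (t * x) / g x) atTop (𝓝 (t ^ ρ))



section Basics
variable {μ : Measure ℝ} [IsProbabilityMeasure μ] (hsupp : μ (Iic 0) = 0) {α : ℝ} (hα : 0 < α)

include hsupp in
set_option linter.unusedSectionVars false in
lemma ae_pos_restrict (s : Set ℝ) : ∀ᵐ y ∂μ.restrict s, 0 < y := by
  have h : μ.restrict s (Iic 0) = 0 :=
    le_antisymm (le_trans (Measure.restrict_apply_le _ _) hsupp.le) zero_le
  have := (measure_eq_zero_iff_ae_notMem (μ := μ.restrict s) (s := Iic 0)).mp h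
  filter_upwards [this] with y hy
  exact lt_of_not_ge (by simpa using hy)

lemma distF_le_one (x : ℝ) : distF μ x ≤ 1 := by
  have h : μ (Iic x) ≤ μ univ := measure_mono (subset_univ (Iic x))
  have h2 : distF μ x ≤ (μ univ).toReal := ENNReal.toReal_mono (measure_ne_top _ _) h
  simpa [measure_univ] using h2

lemma U_nonneg (x : ℝ) : 0 ≤ 1 - distF μ x := by linarith [distF_le_one (μ := μ) x]

omit [IsProbabilityMeasure μ] in
lemma distF_nonneg (x : ℝ) : 0 ≤ distF μ x := ENNReal.toReal_nonneg

lemma U_antitone : Antitone (fun x => 1 - distF μ x) := by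
  intro a b hab
  have : μ (Iic a) ≤ μ (Iic b) := measure_mono (Iic_subset_Iic.2 hab)
  have h2 : distF μ a ≤ distF μ b := ENNReal.toReal_mono (measure_ne_top _ _) this
  simp only
  linarith

lemma U_tendsto_zero : Tendsto (fun x => 1 - distF μ x) atTop (𝓝 0) := by
  have h : Tendsto (fun x => μ (Iic x)) atTop (𝓝 (μ univ)) := tendsto_measure_Iic_atTop μ
  have h2 : Tendsto (fun x => distF μ x) atTop (𝓝 1) := by
    have := (ENNReal.tendsto_toReal (measure_ne_top μ univ)).comp h
    simpa [distF, Function.comp_def, measure_univ] using this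
  simpa using (tendsto_const_nhds (x := (1:ℝ))).sub h2

include hsupp hα in
lemma integrable_rpow (z : ℝ) : IntegrableOn (fun y => y ^ α) (Iic z) μ := by
  refine (integrable_const ((max z 1) ^ α)).mono' ?_ ?_
  · exact (measurable_id.pow_const α).aestronglyMeasurable
  · filter_upwards [ae_pos_restrict hsupp (Iic z), ae_restrict_mem (measurableSet_Iic : MeasurableSet (Iic z))] with y hy hyz
    rw [Real.norm_of_nonneg (Real.rpow_nonneg hy.le _)]
    exact Real.rpow_le_rpow hy.le (le_trans hyz (le_max_left _ _)) hα.le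

include hsupp in
lemma Htr_nonneg (x : ℝ) : 0 ≤ Htr μ α x := by
  refine integral_nonneg_of_ae ?_
  filter_upwards [ae_pos_restrict hsupp (Iic x)] with y hy
  exact Real.rpow_nonneg hy.le _

include hsupp hα in
lemma Htr_diff {x z : ℝ} (hxz : x ≤ z) :
    Htr μ α z - Htr μ α x = ∫ y in Ioc x z, y ^ α ∂μ := by
  have hu : Iic x ∪ Ioc x z = Iic z := Iic_union_Ioc_eq_Iic hxz
  have := setIntegral_union (f := fun y => (y:ℝ) ^ α) (μ := μ)
    (Iic_disjoint_Ioc (le_refl x)) measurableSet_Ioc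
    (integrable_rpow hsupp hα x)
    ((integrable_rpow hsupp hα z).mono_set Ioc_subset_Iic_self)
  rw [hu] at this
  rw [Htr, Htr, this]; ring

include hsupp hα in
lemma Htr_mono : Monotone (Htr μ α) := by
  intro x z hxz
  have h := Htr_diff hsupp hα hxz
  have h2 : 0 ≤ ∫ y in Ioc x z, y ^ α ∂μ := by
    refine integral_nonneg_of_ae ?_
    filter_upwards [ae_pos_restrict hsupp (Ioc x z)] with y hy
    exact Real.rpow_nonneg hy.le _
  linarith

lemma U_diff {x z : ℝ} (hxz : x ≤ z) :
    (1 - distF μ x) - (1 - distF μ z) = (μ (Ioc x z)).toReal := by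
  have hu : Iic x ∪ Ioc x z = Iic z := Iic_union_Ioc_eq_Iic hxz
  have h : μ (Iic z) = μ (Iic x) + μ (Ioc x z) := by
    rw [← hu, measure_union (Iic_disjoint_Ioc (le_refl x)) measurableSet_Ioc]
  have := congrArg ENNReal.toReal h
  rw [ENNReal.toReal_add (measure_ne_top _ _) (measure_ne_top _ _)] at this
  simp only [distF]
  linarith

include hsupp hα in
lemma squeeze_low {x z : ℝ} (hx : 0 < x) (hxz : x ≤ z) :
    x ^ α * ((1 - distF μ x) - (1 - distF μ z)) ≤ Htr μ α z - Htr μ α x := by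
  rw [Htr_diff hsupp hα hxz, U_diff hxz]
  have h := setIntegral_mono_on (μ := μ) (s := Ioc x z) (f := fun _ => x ^ α)
    (g := fun y => y ^ α) (integrableOn_const (measure_ne_top _ _))
    ((integrable_rpow hsupp hα z).mono_set Ioc_subset_Iic_self) measurableSet_Ioc
    (fun y hy => Real.rpow_le_rpow hx.le hy.1.le hα.le)
  simpa [mul_comm, measureReal_def] using h

include hsupp hα in
lemma squeeze_high {x z : ℝ} (hx : 0 < x) (hxz : x ≤ z) :
    Htr μ α z - Htr μ α x ≤ z ^ α * ((1 - distF μ x) - (1 - distF μ z)) := by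
  rw [Htr_diff hsupp hα hxz, U_diff hxz]
  have h := setIntegral_mono_on (μ := μ) (s := Ioc x z) (f := fun y => y ^ α)
    (g := fun _ => z ^ α)
    ((integrable_rpow hsupp hα z).mono_set Ioc_subset_Iic_self)
    (integrableOn_const (measure_ne_top _ _)) measurableSet_Ioc
    (fun y hy => Real.rpow_le_rpow (le_of_lt (lt_trans hx hy.1)) hy.2 hα.le)
  simpa [mul_comm, measureReal_def] using h

include hsupp hα in
lemma Htr_le {x : ℝ} (hx : 0 < x) : Htr μ α x ≤ x ^ α := by
  have h : Htr μ α x ≤ ∫ _ in Iic x, x ^ α ∂μ := by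
    refine integral_mono_ae (integrable_rpow hsupp hα x)
      (integrableOn_const (measure_ne_top _ _)) ?_
    filter_upwards [ae_pos_restrict hsupp (Iic x), ae_restrict_mem (measurableSet_Iic : MeasurableSet (Iic x))] with y hy hyz
    exact Real.rpow_le_rpow hy.le hyz hα.le
  rw [setIntegral_const] at h
  calc Htr μ α x ≤ (μ (Iic x)).toReal • x ^ α := h
    _ ≤ 1 * x ^ α := by
        rw [smul_eq_mul]
        exact mul_le_mul_of_nonneg_right (distF_le_one x) (Real.rpow_nonneg hx.le _)
    _ = x ^ α := one_mul _
end Basics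

lemma RegVary.eventually_pos {g : ℝ → ℝ} {ρ : ℝ} (hg : RegVary g ρ) (h0 : ∀ x, 0 ≤ g x) :
    ∀ᶠ x in atTop, 0 < g x := by
  have h2 : (0:ℝ) < 2 ^ ρ := Real.rpow_pos_of_pos two_pos ρ
  filter_upwards [(hg 2 two_pos).eventually (eventually_gt_nhds h2)] with x hx
  rcases eq_or_lt_of_le (h0 x) with h | h
  · exfalso; rw [← h, div_zero] at hx; exact lt_irrefl 0 hx
  · exact h

lemma RegVary.one_step {g : ℝ → ℝ} {ρ : ℝ} (hg : RegVary g ρ) (h0 : ∀ x, 0 ≤ g x)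
    {t c : ℝ} (ht : 0 < t) (hc : t ^ ρ < c) :
    ∀ᶠ x in atTop, g (t * x) ≤ c * g x := by
  filter_upwards [(hg t ht).eventually (eventually_lt_nhds hc), hg.eventually_pos h0]
    with x hx hpos
  exact le_of_lt ((div_lt_iff₀ hpos).mp hx)


lemma RegVary.one_step_lower {g : ℝ → ℝ} {ρ : ℝ} (hg : RegVary g ρ) (h0 : ∀ x, 0 ≤ g x)
    {t c : ℝ} (ht : 0 < t) (hc : c < t ^ ρ) :
    ∀ᶠ x in atTop, c * g x ≤ g (t * x) := by
  filter_upwards [(hg t ht).eventually (eventually_gt_nhds hc), hg.eventually_pos h0]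
    with x hx hpos
  exact le_of_lt ((lt_div_iff₀ hpos).mp hx)

lemma rpow_pow_comm {a : ℝ} (ha : 0 ≤ a) (b : ℝ) (k : ℕ) :
    (a ^ b) ^ k = ((a ^ k : ℝ)) ^ b := by
  rw [← Real.rpow_natCast (a ^ b) k, ← Real.rpow_natCast a k,
    ← Real.rpow_mul ha, ← Real.rpow_mul ha, mul_comm]

lemma tendsto_ratio_limit {a b : ℝ} (ha : 0 < a) (hb : b < 0) :
    Tendsto (fun l : ℝ => (l ^ a - 1) * (1 - l ^ b)⁻¹) (𝓝[>] (1:ℝ)) (𝓝 (a / (-b))) := by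
  have hsub : 𝓝[>] (1:ℝ) ≤ 𝓝[≠] (1:ℝ) :=
    nhdsWithin_mono 1 (fun x hx => ne_of_gt hx)
  have slope1 : Tendsto (fun l : ℝ => (l ^ a - 1) / (l - 1)) (𝓝[>] (1:ℝ)) (𝓝 a) := by
    have hd : HasDerivAt (fun x : ℝ => x ^ a) (a * (1:ℝ) ^ (a - 1)) 1 :=
      Real.hasDerivAt_rpow_const (Or.inl one_ne_zero)
    have h2 := (hasDerivAt_iff_tendsto_slope.mp hd).mono_left hsub
    rw [Real.one_rpow, mul_one] at h2
    refine Tendsto.congr (fun l => ?_) h2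
    simp [slope_def_field, Real.one_rpow]
  have slope2 : Tendsto (fun l : ℝ => (1 - l ^ b) / (l - 1)) (𝓝[>] (1:ℝ)) (𝓝 (-b)) := by
    have hd : HasDerivAt (fun x : ℝ => x ^ b) (b * (1:ℝ) ^ (b - 1)) 1 :=
      Real.hasDerivAt_rpow_const (Or.inl one_ne_zero)
    have h2 := (hasDerivAt_iff_tendsto_slope.mp hd).mono_left hsub
    rw [Real.one_rpow, mul_one] at h2
    have h3 : Tendsto (fun l : ℝ => -(slope (fun x : ℝ => x ^ b) 1 l)) (𝓝[>] (1:ℝ)) (𝓝 (-b)) :=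
      h2.neg
    refine Tendsto.congr (fun l => ?_) h3
    simp [slope_def_field, Real.one_rpow]
    ring
  have hne : (-b) ≠ 0 := by linarith
  have := slope1.div slope2 hne
  refine Tendsto.congr' ?_ this
  filter_upwards [eventually_mem_nhdsWithin] with l hl
  have hl1 : (1:ℝ) < l := hl
  have h1 : l - 1 ≠ 0 := sub_ne_zero.mpr (ne_of_gt hl1)
  have h2 : 1 - l ^ b ≠ 0 := by
    have := Real.rpow_lt_one_of_one_lt_of_neg hl1 hb
    linarith
  simp only [Pi.div_apply]
  field_simp

lemma tendsto_rpow_one {c : ℝ} :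
    Tendsto (fun l : ℝ => l ^ c) (𝓝[>] (1:ℝ)) (𝓝 1) := by
  have h : ContinuousAt (fun x : ℝ => x ^ c) 1 :=
    Real.continuousAt_rpow_const 1 c (Or.inl one_ne_zero)
  have := h.tendsto.mono_left (nhdsWithin_le_nhds (s := Ioi (1:ℝ)))
  simpa [Real.one_rpow] using this

section Main
variable {μ : Measure ℝ} [IsProbabilityMeasure μ] (hsupp : μ (Iic 0) = 0) {α θ : ℝ}
  (hα : 0 < α) (hθ : 0 < θ) (hθα : θ < α)

include hsupp hα hθ hθα in
lemma lemA (hH : RegVary (Htr μ α) θ) :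
    Tendsto (fun x => x ^ α * (1 - distF μ x) / Htr μ α x) atTop (𝓝 (θ / (α - θ))) := by
  have hαθ : (0:ℝ) < α - θ := by linarith
  have key : ∀ l : ℝ, 1 < l → ∃ S : ℝ → ℝ,
      Tendsto S atTop (𝓝 ((l ^ θ - 1) * (1 - l ^ (θ - α))⁻¹)) ∧
      ∀ᶠ x in atTop, (l ^ α)⁻¹ * S x ≤ x ^ α * (1 - distF μ x) / Htr μ α x ∧
        x ^ α * (1 - distF μ x) / Htr μ α x ≤ S x := by
    intro l hl1
    have hl0 : (0:ℝ) < l := lt_trans one_pos hl1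
    have hθα' : θ - α < 0 := by linarith
    have hρ1 : l ^ (θ - α) < 1 := Real.rpow_lt_one_of_one_lt_of_neg hl1 hθα'
    have hρ0 : (0:ℝ) ≤ l ^ (θ - α) := Real.rpow_nonneg hl0.le _
    have hlα_pos : (0:ℝ) < l ^ α := Real.rpow_pos_of_pos hl0 α
    have hlθ_pos : (0:ℝ) < l ^ θ := Real.rpow_pos_of_pos hl0 θ
    have hθltα : l ^ θ < l ^ α := Real.rpow_lt_rpow_of_exponent_lt hl1 hθα
    set w := (l ^ α)⁻¹ with hwdef
    have hw0 : 0 < w := inv_pos.2 hlα_pos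
    set c := (l ^ θ + l ^ α) / 2 with hcdef
    have hθc : l ^ θ < c := by rw [hcdef]; linarith
    have hcα : c < l ^ α := by rw [hcdef]; linarith
    have hc0 : 0 < c := by linarith
    set r := c * w with hrdef
    have hr0 : 0 ≤ r := le_of_lt (mul_pos hc0 hw0)
    have hr1 : r < 1 := by
      rw [hrdef, hwdef, ← div_eq_mul_inv, div_lt_one hlα_pos]; exact hcα
    -- eventual facts
    have hHpos := hH.eventually_pos (fun x => Htr_nonneg hsupp x)
    have hstep := hH.one_step (fun x => Htr_nonneg hsupp x) hl0 hθc
    obtain ⟨X, hX⟩ := eventually_atTop.1 (hHpos.and (hstep.and (eventually_ge_atTop 1)))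
    -- geometric bound
    have hgeom : ∀ x, X ≤ x → ∀ k : ℕ, Htr μ α (l ^ k * x) ≤ c ^ k * Htr μ α x := by
      intro x hx
      intro k
      induction k with
      | zero => simp
      | succ k ih =>
        have hx1 : (1:ℝ) ≤ x := (hX x hx).2.2
        have hxk : X ≤ l ^ k * x :=
          le_trans hx (le_mul_of_one_le_left (by linarith) (one_le_pow₀ hl1.le))
        calc Htr μ α (l ^ (k+1) * x) = Htr μ α (l * (l ^ k * x)) := by rw [show l ^ (k+1) * x = l * (l ^ k * x) by ring]
          _ ≤ c * Htr μ α (l ^ k * x) := (hX _ hxk).2.1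
          _ ≤ c * (c ^ k * Htr μ α x) := mul_le_mul_of_nonneg_left ih hc0.le
          _ = c ^ (k+1) * Htr μ α x := by ring
    -- HasSum for the ratio
    have hsum : ∀ x : ℝ, 0 < x →
        HasSum (fun k : ℕ => x ^ α *
            ((1 - distF μ (l ^ k * x)) - (1 - distF μ (l ^ (k+1) * x))) / Htr μ α x)
          (x ^ α * (1 - distF μ x) / Htr μ α x) := by
      intro x hx
      have h1 : HasSum (fun k : ℕ =>
          (1 - distF μ (l ^ k * x)) - (1 - distF μ (l ^ (k+1) * x))) (1 - distF μ x) := by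
        have hnn : ∀ k : ℕ, 0 ≤ (1 - distF μ (l ^ k * x)) - (1 - distF μ (l ^ (k+1) * x)) := by
          intro k
          refine sub_nonneg.2 (U_antitone ?_)
          exact mul_le_mul_of_nonneg_right (pow_le_pow_right₀ hl1.le (Nat.le_succ k)) hx.le
        rw [hasSum_iff_tendsto_nat_of_nonneg hnn]
        have heq : ∀ n : ℕ, ∑ k ∈ Finset.range n,
            ((1 - distF μ (l ^ k * x)) - (1 - distF μ (l ^ (k+1) * x)))
            = (1 - distF μ (l ^ 0 * x)) - (1 - distF μ (l ^ n * x)) :=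
          fun n => Finset.sum_range_sub' (fun k => 1 - distF μ (l ^ k * x)) n
        have hatTop : Tendsto (fun n : ℕ => l ^ n * x) atTop atTop :=
          (tendsto_pow_atTop_atTop_of_one_lt hl1).atTop_mul_const hx
        have h2 : Tendsto (fun n : ℕ => 1 - distF μ (l ^ n * x)) atTop (𝓝 0) :=
          (U_tendsto_zero (μ := μ)).comp hatTop
        have h3 : Tendsto (fun n : ℕ =>
            (1 - distF μ (l ^ 0 * x)) - (1 - distF μ (l ^ n * x))) atTop
            (𝓝 (1 - distF μ x)) := by
          have := (tendsto_const_nhds (x := 1 - distF μ (l ^ 0 * x))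
            (f := (atTop : Filter ℕ))).sub h2
          simpa [pow_zero, one_mul] using this
        exact h3.congr (fun n => (heq n).symm)
      exact (h1.mul_left _).div_const _
    -- per-term bounds
    have hterm : ∀ x, X ≤ x → ∀ k : ℕ,
        w ^ (k+1) * ((Htr μ α (l ^ (k+1) * x) - Htr μ α (l ^ k * x)) / Htr μ α x)
          ≤ x ^ α * ((1 - distF μ (l ^ k * x)) - (1 - distF μ (l ^ (k+1) * x))) / Htr μ α x ∧
        x ^ α * ((1 - distF μ (l ^ k * x)) - (1 - distF μ (l ^ (k+1) * x))) / Htr μ α x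
          ≤ w ^ k * ((Htr μ α (l ^ (k+1) * x) - Htr μ α (l ^ k * x)) / Htr μ α x) := by
      intro x hx k
      obtain ⟨hHx, -, hx1⟩ := hX x hx
      have hx0 : (0:ℝ) < x := lt_of_lt_of_le one_pos hx1
      have hy0 : 0 < l ^ k * x := mul_pos (pow_pos hl0 k) hx0
      have hyz : l ^ k * x ≤ l ^ (k+1) * x :=
        mul_le_mul_of_nonneg_right (pow_le_pow_right₀ hl1.le (Nat.le_succ k)) hx0.le
      have hpow : ∀ m : ℕ, (l ^ m * x) ^ α = (l ^ α) ^ m * x ^ α := by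
        intro m
        rw [Real.mul_rpow (pow_nonneg hl0.le m) hx0.le, ← rpow_pow_comm hl0.le]
      have hsl := squeeze_low hsupp hα hy0 hyz
      have hsh := squeeze_high hsupp hα hy0 hyz
      rw [hpow k] at hsl
      rw [hpow (k+1)] at hsh
      set D := (1 - distF μ (l ^ k * x)) - (1 - distF μ (l ^ (k+1) * x)) with hD
      set ΔH := Htr μ α (l ^ (k+1) * x) - Htr μ α (l ^ k * x) with hΔ
      have hwk : ∀ m : ℕ, w ^ m * (l ^ α) ^ m = 1 := by
        intro m
        rw [hwdef, ← mul_pow, inv_mul_cancel₀ (ne_of_gt hlα_pos), one_pow]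
      constructor
      · -- lower: w^(k+1) * (ΔH / Hx) ≤ x^α * D / Hx
        have h1 : w ^ (k+1) * ΔH ≤ x ^ α * D := by
          have := mul_le_mul_of_nonneg_left hsh (le_of_lt (pow_pos hw0 (k+1)))
          calc w ^ (k+1) * ΔH ≤ w ^ (k+1) * ((l ^ α) ^ (k+1) * x ^ α * D) := this
            _ = (w ^ (k+1) * (l ^ α) ^ (k+1)) * (x ^ α * D) := by ring
            _ = x ^ α * D := by rw [hwk (k+1), one_mul]
        rw [← mul_div_assoc]
        exact div_le_div_of_nonneg_right h1 hHx.le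
      · have h1 : x ^ α * D ≤ w ^ k * ΔH := by
          have := mul_le_mul_of_nonneg_left hsl (le_of_lt (pow_pos hw0 k))
          calc x ^ α * D = (w ^ k * (l ^ α) ^ k) * (x ^ α * D) := by rw [hwk k, one_mul]
            _ = w ^ k * ((l ^ α) ^ k * x ^ α * D) := by ring
            _ ≤ w ^ k * ΔH := this
        rw [← mul_div_assoc]
        exact div_le_div_of_nonneg_right h1 hHx.le
    -- the dominating series S
    refine ⟨fun x => ∑' k : ℕ, w ^ k *
      ((Htr μ α (l ^ (k+1) * x) - Htr μ α (l ^ k * x)) / Htr μ α x), ?_, ?_⟩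
    · -- Tendsto S atTop (𝓝 A)
      have hbound : Summable (fun k : ℕ => c * r ^ k) :=
        (summable_geometric_of_lt_one hr0 hr1).mul_left c
      have hlim : ∀ k : ℕ, Tendsto (fun x => w ^ k *
          ((Htr μ α (l ^ (k+1) * x) - Htr μ α (l ^ k * x)) / Htr μ α x)) atTop
          (𝓝 (w ^ k * ((l ^ θ) ^ (k+1) - (l ^ θ) ^ k))) := by
        intro k
        have hHk : ∀ m : ℕ, Tendsto (fun x => Htr μ α (l ^ m * x) / Htr μ α x) atTop
            (𝓝 ((l ^ θ) ^ m)) := by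
          intro m
          have := hH (l ^ m) (pow_pos hl0 m)
          rwa [← rpow_pow_comm hl0.le] at this
        have := ((hHk (k+1)).sub (hHk k)).const_mul (w ^ k)
        refine Tendsto.congr (fun x => ?_) this
        rw [sub_div]
      have hdom : ∀ᶠ x in atTop, ∀ k : ℕ, ‖w ^ k *
          ((Htr μ α (l ^ (k+1) * x) - Htr μ α (l ^ k * x)) / Htr μ α x)‖ ≤ c * r ^ k := by
        filter_upwards [eventually_ge_atTop X] with x hx k
        obtain ⟨hHx, -, hx1⟩ := hX x hx
        have hx0 : (0:ℝ) < x := lt_of_lt_of_le one_pos hx1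
        have hmon : Htr μ α (l ^ k * x) ≤ Htr μ α (l ^ (k+1) * x) :=
          Htr_mono hsupp hα (mul_le_mul_of_nonneg_right (pow_le_pow_right₀ hl1.le (Nat.le_succ k)) hx0.le)
        have hnn : 0 ≤ w ^ k * ((Htr μ α (l ^ (k+1) * x) - Htr μ α (l ^ k * x)) / Htr μ α x) :=
          mul_nonneg (le_of_lt (pow_pos hw0 k)) (div_nonneg (by linarith) hHx.le)
        rw [Real.norm_of_nonneg hnn]
        have h1 : Htr μ α (l ^ (k+1) * x) - Htr μ α (l ^ k * x) ≤ c ^ (k+1) * Htr μ α x := by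
          have h2 := hgeom x hx (k+1)
          have h3 := Htr_nonneg hsupp (α := α) (l ^ k * x)
          linarith
        have h4 : (Htr μ α (l ^ (k+1) * x) - Htr μ α (l ^ k * x)) / Htr μ α x ≤ c ^ (k+1) :=
          (div_le_iff₀ hHx).2 h1
        calc w ^ k * ((Htr μ α (l ^ (k+1) * x) - Htr μ α (l ^ k * x)) / Htr μ α x)
            ≤ w ^ k * c ^ (k+1) := mul_le_mul_of_nonneg_left h4 (le_of_lt (pow_pos hw0 k))
          _ = c * r ^ k := by rw [hrdef, mul_pow]; ring
      have := tendsto_tsum_of_dominated_convergence hbound hlim hdom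
      have htsum : (∑' k : ℕ, w ^ k * ((l ^ θ) ^ (k+1) - (l ^ θ) ^ k))
          = (l ^ θ - 1) * (1 - l ^ (θ - α))⁻¹ := by
        have hterm2 : ∀ k : ℕ, w ^ k * ((l ^ θ) ^ (k+1) - (l ^ θ) ^ k)
            = (l ^ θ - 1) * (l ^ (θ - α)) ^ k := by
          intro k
          have hρ : l ^ (θ - α) = l ^ θ * w := by
            rw [hwdef, Real.rpow_sub hl0, div_eq_mul_inv]
          rw [hρ, mul_pow]
          ring
        rw [tsum_congr hterm2, tsum_mul_left, tsum_geometric_of_lt_one hρ0 hρ1]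
      rwa [htsum] at this
    · -- sandwich
      filter_upwards [eventually_ge_atTop X] with x hx
      obtain ⟨hHx, -, hx1⟩ := hX x hx
      have hx0 : (0:ℝ) < x := lt_of_lt_of_le one_pos hx1
      have hgsum : Summable (fun k : ℕ => w ^ k *
          ((Htr μ α (l ^ (k+1) * x) - Htr μ α (l ^ k * x)) / Htr μ α x)) := by
        refine Summable.of_nonneg_of_le ?_ ?_ ((summable_geometric_of_lt_one hr0 hr1).mul_left c)
        · intro k
          have hmon : Htr μ α (l ^ k * x) ≤ Htr μ α (l ^ (k+1) * x) :=
            Htr_mono hsupp hα (mul_le_mul_of_nonneg_right (pow_le_pow_right₀ hl1.le (Nat.le_succ k)) hx0.le)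
          exact mul_nonneg (le_of_lt (pow_pos hw0 k)) (div_nonneg (by linarith) hHx.le)
        · intro k
          have h1 : Htr μ α (l ^ (k+1) * x) - Htr μ α (l ^ k * x) ≤ c ^ (k+1) * Htr μ α x := by
            have h2 := hgeom x hx (k+1)
            have h3 := Htr_nonneg hsupp (α := α) (l ^ k * x)
            linarith
          have h4 : (Htr μ α (l ^ (k+1) * x) - Htr μ α (l ^ k * x)) / Htr μ α x ≤ c ^ (k+1) :=
            (div_le_iff₀ hHx).2 h1
          calc w ^ k * ((Htr μ α (l ^ (k+1) * x) - Htr μ α (l ^ k * x)) / Htr μ α x)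
              ≤ w ^ k * c ^ (k+1) := mul_le_mul_of_nonneg_left h4 (le_of_lt (pow_pos hw0 k))
            _ = c * r ^ k := by rw [hrdef, mul_pow]; ring
      have hRsum := hsum x hx0
      constructor
      · -- lower
        have heq : w * ∑' k : ℕ, w ^ k *
            ((Htr μ α (l ^ (k+1) * x) - Htr μ α (l ^ k * x)) / Htr μ α x)
            = ∑' k : ℕ, w ^ (k+1) *
            ((Htr μ α (l ^ (k+1) * x) - Htr μ α (l ^ k * x)) / Htr μ α x) := by
          rw [← tsum_mul_left]
          exact tsum_congr (fun k => by ring)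
        rw [heq, ← hRsum.tsum_eq]
        refine Summable.tsum_le_tsum (fun k => (hterm x hx k).1) ?_ hRsum.summable
        exact (hgsum.mul_left w).congr (fun k => by ring)
      · rw [← hRsum.tsum_eq]
        exact Summable.tsum_le_tsum (fun k => (hterm x hx k).2) hRsum.summable hgsum
  -- conclude via order
  rw [tendsto_order]
  constructor
  · intro b hb
    have hAl : Tendsto (fun l : ℝ => (l ^ α)⁻¹ * ((l ^ θ - 1) * (1 - l ^ (θ - α))⁻¹))
        (𝓝[>] (1:ℝ)) (𝓝 (θ / (α - θ))) := by
      have h1 : Tendsto (fun l : ℝ => (l ^ α)⁻¹) (𝓝[>] (1:ℝ)) (𝓝 1) := by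
        have := (tendsto_rpow_one (c := α)).inv₀ one_ne_zero
        simpa using this
      have h2 := tendsto_ratio_limit hθ (show θ - α < 0 by linarith)
      have := h1.mul h2
      rw [one_mul] at this
      convert this using 2
      rw [neg_sub]
    obtain ⟨l, hbl, hl1⟩ :=
      ((hAl.eventually (eventually_gt_nhds hb)).and eventually_mem_nhdsWithin).exists
    obtain ⟨S, hS, hSb⟩ := key l hl1
    have hS2 : Tendsto (fun x => (l ^ α)⁻¹ * S x) atTop
        (𝓝 ((l ^ α)⁻¹ * ((l ^ θ - 1) * (1 - l ^ (θ - α))⁻¹))) := hS.const_mul _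
    filter_upwards [hS2.eventually (eventually_gt_nhds hbl), hSb] with x h1 h2
    exact lt_of_lt_of_le h1 h2.1
  · intro b hb
    have hAl : Tendsto (fun l : ℝ => (l ^ θ - 1) * (1 - l ^ (θ - α))⁻¹)
        (𝓝[>] (1:ℝ)) (𝓝 (θ / (α - θ))) := by
      have h2 := tendsto_ratio_limit hθ (show θ - α < 0 by linarith)
      convert h2 using 2
      rw [neg_sub]
    obtain ⟨l, hbl, hl1⟩ :=
      ((hAl.eventually (eventually_lt_nhds hb)).and eventually_mem_nhdsWithin).exists
    obtain ⟨S, hS, hSb⟩ := key l hl1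
    filter_upwards [hS.eventually (eventually_lt_nhds hbl), hSb] with x h1 h2
    exact lt_of_le_of_lt h2.2 h1

end Main

section MainB
variable {μ : Measure ℝ} [IsProbabilityMeasure μ] (hsupp : μ (Iic 0) = 0) {α θ : ℝ}
  (hα : 0 < α) (hθ : 0 < θ) (hθα : θ < α)

include hα hθ hθα in
lemma xaU_atTop (hU : RegVary (fun x => 1 - distF μ x) (θ - α)) :
    Tendsto (fun x => x ^ α * (1 - distF μ x)) atTop atTop := by
  have h2θ : (1:ℝ) < 2 ^ θ := Real.one_lt_rpow_iff_of_pos two_pos |>.2 (Or.inl ⟨one_lt_two, hθ⟩)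
  set q : ℝ := (2 ^ θ + 1) / 2 with hq
  have hq1 : 1 < q := by rw [hq]; linarith
  have hqθ : q < 2 ^ θ := by rw [hq]; linarith
  have hq0 : 0 < q := by linarith
  have h2α : (0:ℝ) < 2 ^ α := Real.rpow_pos_of_pos two_pos α
  have hcc : q * (2 ^ α)⁻¹ < 2 ^ (θ - α) := by
    rw [Real.rpow_sub two_pos, div_eq_mul_inv]
    exact mul_lt_mul_of_pos_right hqθ (inv_pos.2 h2α)
  have hstep := hU.one_step_lower (fun x => U_nonneg x) two_pos hcc
  have hUpos := hU.eventually_pos (fun x => U_nonneg x)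
  obtain ⟨X₀, hX₀⟩ := eventually_atTop.1 ((hstep.and hUpos).and (eventually_ge_atTop 1))
  set Y := max X₀ 1 with hYdef
  have hY1 : (1:ℝ) ≤ Y := le_max_right _ _
  have hY0 : (0:ℝ) < Y := lt_of_lt_of_le one_pos hY1
  have hfacts : ∀ y, Y ≤ y → (q * (2 ^ α)⁻¹ * (1 - distF μ y) ≤ 1 - distF μ (2 * y)
      ∧ 0 < 1 - distF μ y) ∧ 1 ≤ y := fun y hy => hX₀ y (le_trans (le_max_left _ _) hy)
  -- one-step for g
  have hgstep : ∀ y, Y ≤ y → q * (y ^ α * (1 - distF μ y)) ≤ (2*y) ^ α * (1 - distF μ (2*y)) := by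
    intro y hy
    obtain ⟨⟨h1, h2⟩, h3⟩ := hfacts y hy
    have hy0 : (0:ℝ) < y := lt_of_lt_of_le one_pos h3
    have hpow : (2*y) ^ α = 2 ^ α * y ^ α := Real.mul_rpow (by norm_num) hy0.le
    rw [hpow]
    have hyα : (0:ℝ) < y ^ α := Real.rpow_pos_of_pos hy0 α
    have := mul_le_mul_of_nonneg_left h1 (le_of_lt (mul_pos h2α hyα))
    calc q * (y ^ α * (1 - distF μ y)) = 2 ^ α * y ^ α * (q * (2 ^ α)⁻¹ * (1 - distF μ y)) := by
          field_simp
      _ ≤ 2 ^ α * y ^ α * (1 - distF μ (2 * y)) := this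
      _ = 2 ^ α * y ^ α * (1 - distF μ (2 * y)) := rfl
  set C := Y ^ α * (1 - distF μ (2 * Y)) with hC
  have hC0 : 0 < C := by
    refine mul_pos (Real.rpow_pos_of_pos hY0 α) ?_
    exact (hfacts (2*Y) (by nlinarith)).1.2
  -- bands
  have hband : ∀ n : ℕ, ∀ y, Y ≤ y → y ≤ 2 ^ (n+1) * Y → C ≤ y ^ α * (1 - distF μ y) := by
    intro n
    induction n with
    | zero =>
      intro y hy hy2
      rw [pow_one] at hy2
      have hy0 : (0:ℝ) < y := lt_of_lt_of_le hY0 hy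
      refine mul_le_mul (Real.rpow_le_rpow hY0.le hy hα.le) (U_antitone hy2)
        (U_nonneg _) (Real.rpow_nonneg hy0.le _)
    | succ n ih =>
      intro y hy hy2
      by_cases hcase : y ≤ 2 ^ (n+1) * Y
      · exact ih y hy hcase
      · push_neg at hcase
        have h2Y : 2 * Y ≤ 2 ^ (n+1) * Y := by
          have : (2:ℝ) ≤ 2 ^ (n+1) := by
            calc (2:ℝ) = 2 ^ 1 := (pow_one 2).symm
            _ ≤ 2 ^ (n+1) := pow_le_pow_right₀ one_le_two (by omega)
          nlinarith
        have hyY : Y ≤ y / 2 := by nlinarith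
        have hy2' : y / 2 ≤ 2 ^ (n+1) * Y := by
          rw [pow_succ (n := n+1)] at hy2; linarith
        have := hgstep (y/2) hyY
        rw [mul_div_cancel₀ _ (two_ne_zero)] at this
        calc C ≤ (y/2) ^ α * (1 - distF μ (y/2)) := ih (y/2) hyY hy2'
          _ ≤ q * ((y/2) ^ α * (1 - distF μ (y/2))) := le_mul_of_one_le_left
              (mul_nonneg (Real.rpow_nonneg (by nlinarith) _) (U_nonneg _)) hq1.le
          _ ≤ y ^ α * (1 - distF μ y) := this
  have hall : ∀ y, Y ≤ y → C ≤ y ^ α * (1 - distF μ y) := by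
    intro y hy
    obtain ⟨n, hn⟩ := pow_unbounded_of_one_lt (y / Y) one_lt_two
    refine hband n y hy ?_
    have h3 := (div_lt_iff₀ hY0).1 hn
    have h4 : (2:ℝ) ^ n * Y ≤ 2 ^ (n+1) * Y := by
      rw [pow_succ]
      nlinarith [pow_pos (two_pos (α := ℝ)) n, hY0]
    linarith
  have hgrow : ∀ n : ℕ, ∀ y, 2 ^ n * Y ≤ y → q ^ n * C ≤ y ^ α * (1 - distF μ y) := by
    intro n
    induction n with
    | zero => intro y hy; simpa using hall y (by simpa using hy)
    | succ n ih =>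
      intro y hy
      have h1 : (1:ℝ) ≤ 2 ^ n := one_le_pow₀ one_le_two
      rw [pow_succ] at hy
      have h2 : 2 ^ n * Y ≤ y / 2 := by linarith
      have hyY : Y ≤ y / 2 := le_trans (by nlinarith) h2
      have := hgstep (y/2) hyY
      rw [mul_div_cancel₀ _ (two_ne_zero)] at this
      calc q ^ (n+1) * C = q * (q ^ n * C) := by ring
        _ ≤ q * ((y/2) ^ α * (1 - distF μ (y/2))) :=
            mul_le_mul_of_nonneg_left (ih (y/2) h2) hq0.le
        _ ≤ y ^ α * (1 - distF μ y) := this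
  rw [tendsto_atTop]
  intro M
  obtain ⟨n, hn⟩ := pow_unbounded_of_one_lt (M / C) hq1
  filter_upwards [eventually_ge_atTop (2 ^ n * Y)] with y hy
  have := hgrow n y hy
  have hMn : M ≤ q ^ n * C := by
    rw [div_lt_iff₀ hC0] at hn
    linarith
  linarith
include hsupp hα hθ hθα in
set_option maxHeartbeats 1000000 in
lemma lemQ (hU : RegVary (fun x => 1 - distF μ x) (θ - α)) :
    Tendsto (fun x => Htr μ α x / (x ^ α * (1 - distF μ x))) atTop (𝓝 ((α - θ) / θ)) := by
  classical
  have key : ∀ l : ℝ, 1 < l → ∃ T E : ℝ → ℝ,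
      Tendsto T atTop (𝓝 ((l ^ (α - θ) - 1) * (1 - l ^ (-θ))⁻¹)) ∧
      Tendsto E atTop (𝓝 0) ∧
      ∀ᶠ x in atTop, (l ^ α)⁻¹ * T x ≤ Htr μ α x / (x ^ α * (1 - distF μ x)) ∧
        Htr μ α x / (x ^ α * (1 - distF μ x)) ≤ T x + E x := by
    intro l hl1
    have hl0 : (0:ℝ) < l := lt_trans one_pos hl1
    have hρ1 : l ^ (-θ) < 1 := Real.rpow_lt_one_of_one_lt_of_neg hl1 (by linarith)
    have hρ0 : (0:ℝ) ≤ l ^ (-θ) := Real.rpow_nonneg hl0.le _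
    have hlα_pos : (0:ℝ) < l ^ α := Real.rpow_pos_of_pos hl0 α
    have hlαθ_pos : (0:ℝ) < l ^ (α - θ) := Real.rpow_pos_of_pos hl0 _
    have hαθα : l ^ (α - θ) < l ^ α := Real.rpow_lt_rpow_of_exponent_lt hl1 (by linarith)
    set w := (l ^ α)⁻¹ with hwdef
    have hw0 : 0 < w := inv_pos.2 hlα_pos
    set c := (l ^ (α - θ) + l ^ α) / 2 with hcdef
    have hc1 : l ^ (α - θ) < c := by rw [hcdef]; linarith
    have hc2 : c < l ^ α := by rw [hcdef]; linarith
    have hc0 : 0 < c := by linarith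
    set r := c * w with hrdef
    have hr0 : 0 ≤ r := le_of_lt (mul_pos hc0 hw0)
    have hr1 : r < 1 := by
      rw [hrdef, hwdef, ← div_eq_mul_inv, div_lt_one hlα_pos]; exact hc2
    have hinv : c⁻¹ < l ^ (θ - α) := by
      have h1 : l ^ (θ - α) = (l ^ (α - θ))⁻¹ := by
        rw [← Real.rpow_neg hl0.le, neg_sub]
      rw [h1]
      exact inv_strictAnti₀ hlαθ_pos hc1
    have hstep := hU.one_step_lower (fun x => U_nonneg x) hl0 hinv
    have hUpos := hU.eventually_pos (fun x => U_nonneg x)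
    obtain ⟨X₀, hX₀⟩ := eventually_atTop.1 (hstep.and hUpos)
    set Y := max X₀ 1 with hYdef
    have hY1 : (1:ℝ) ≤ Y := le_max_right _ _
    have hY0 : (0:ℝ) < Y := lt_of_lt_of_le one_pos hY1
    have hfacts : ∀ y, Y ≤ y →
        c⁻¹ * (1 - distF μ y) ≤ 1 - distF μ (l * y) ∧ 0 < 1 - distF μ y :=
      fun y hy => hX₀ y (le_trans (le_max_left _ _) hy)
    -- downward chain
    have hchain : ∀ x, ∀ k : ℕ, Y * l ^ (k+1) ≤ x →
        1 - distF μ (x / l ^ (k+1)) ≤ c ^ (k+1) * (1 - distF μ x) := by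
      intro x k
      induction k with
      | zero =>
        intro hx
        have h1 : Y ≤ x / l := by
          rw [le_div_iff₀ hl0]; simpa [pow_one] using hx
        have h2 := (hfacts (x/l) h1).1
        rw [mul_div_cancel₀ _ (ne_of_gt hl0)] at h2
        have h3 := (inv_mul_le_iff₀ hc0).1 h2
        simpa [pow_one] using h3
      | succ k ih =>
        intro hx
        have hll : l ^ (k+1) ≤ l ^ (k+1+1) := pow_le_pow_right₀ hl1.le (by omega)
        have hx' : Y * l ^ (k+1) ≤ x := le_trans (by nlinarith) hx
        have h1 : Y ≤ x / l ^ (k+1+1) := (le_div_iff₀ (pow_pos hl0 _)).2 hx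
        have h2 := (hfacts (x / l ^ (k+1+1)) h1).1
        have h3 : l * (x / l ^ (k+1+1)) = x / l ^ (k+1) := by
          rw [eq_div_iff (ne_of_gt (pow_pos hl0 _))]
          field_simp
          ring
        rw [h3] at h2
        have h4 := (inv_mul_le_iff₀ hc0).1 h2
        calc 1 - distF μ (x / l ^ (k+1+1)) ≤ c * (1 - distF μ (x / l ^ (k+1))) := h4
          _ ≤ c * (c ^ (k+1) * (1 - distF μ x)) := mul_le_mul_of_nonneg_left (ih hx') hc0.le
          _ = c ^ (k+1+1) * (1 - distF μ x) := by ring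
    -- the series terms
    set f : ℝ → ℕ → ℝ := fun x k => if Y * l ^ (k+1) ≤ x then
        w ^ k * (((1 - distF μ (x / l ^ (k+1))) - (1 - distF μ (x / l ^ k))) / (1 - distF μ x))
        else 0 with hfdef
    have hDnn : ∀ x k, 0 < x →
        0 ≤ (1 - distF μ (x / l ^ (k+1))) - (1 - distF μ (x / l ^ k)) := by
      intro x k hx0
      refine sub_nonneg.2 (U_antitone ?_)
      apply div_le_div_of_nonneg_left hx0.le (pow_pos hl0 k)
      exact pow_le_pow_right₀ hl1.le (Nat.le_succ k)
    have hfbound : ∀ x, Y ≤ x → ∀ k, 0 ≤ f x k ∧ f x k ≤ c * r ^ k := by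
      intro x hx k
      have hx0 : (0:ℝ) < x := lt_of_lt_of_le hY0 hx
      have hUx := (hfacts x hx).2
      rw [hfdef]
      simp only
      split_ifs with hcond
      · constructor
        · exact mul_nonneg (le_of_lt (pow_pos hw0 k)) (div_nonneg (hDnn x k hx0) hUx.le)
        · have h1 : (1 - distF μ (x / l ^ (k+1))) - (1 - distF μ (x / l ^ k))
              ≤ c ^ (k+1) * (1 - distF μ x) := by
            have := hchain x k hcond
            have h2 : 0 ≤ 1 - distF μ (x / l ^ k) := U_nonneg _
            linarith
          have h4 : ((1 - distF μ (x / l ^ (k+1))) - (1 - distF μ (x / l ^ k)))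
              / (1 - distF μ x) ≤ c ^ (k+1) := (div_le_iff₀ hUx).2 h1
          calc w ^ k * (((1 - distF μ (x / l ^ (k+1))) - (1 - distF μ (x / l ^ k)))
              / (1 - distF μ x)) ≤ w ^ k * c ^ (k+1) :=
                mul_le_mul_of_nonneg_left h4 (le_of_lt (pow_pos hw0 k))
            _ = c * r ^ k := by rw [hrdef, mul_pow]; ring
      · exact ⟨le_refl 0, le_of_lt (mul_pos hc0 (pow_pos (lt_of_lt_of_le (mul_pos hc0 hw0) (le_refl r)) k))⟩
    have hbound : Summable (fun k : ℕ => c * r ^ k) :=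
      (summable_geometric_of_lt_one hr0 hr1).mul_left c
    -- limits of terms
    have hUk : ∀ m : ℕ, Tendsto (fun x => (1 - distF μ (x / l ^ m)) / (1 - distF μ x)) atTop
        (𝓝 ((l ^ (α - θ)) ^ m)) := by
      intro m
      have h1 := hU ((l ^ m)⁻¹) (inv_pos.2 (pow_pos hl0 m))
      have h2 : (((l ^ m : ℝ))⁻¹) ^ (θ - α) = (l ^ (α - θ)) ^ m := by
        rw [← Real.rpow_natCast l m, ← Real.rpow_neg_one, ← Real.rpow_mul hl0.le,
          ← Real.rpow_mul hl0.le, ← Real.rpow_natCast (l ^ (α - θ)) m,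
          ← Real.rpow_mul hl0.le]
        ring_nf
      rw [h2] at h1
      refine Tendsto.congr (fun x => ?_) h1
      rw [inv_mul_eq_div]
    have hlim : ∀ k : ℕ, Tendsto (fun x => f x k) atTop
        (𝓝 (w ^ k * ((l ^ (α - θ)) ^ (k+1) - (l ^ (α - θ)) ^ k))) := by
      intro k
      have := ((hUk (k+1)).sub (hUk k)).const_mul (w ^ k)
      refine Tendsto.congr' ?_ this
      filter_upwards [eventually_ge_atTop (Y * l ^ (k+1))] with x hx
      rw [hfdef]
      simp only [if_pos hx]
      ring
    have hdom : ∀ᶠ x in atTop, ∀ k : ℕ, ‖f x k‖ ≤ c * r ^ k := by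
      filter_upwards [eventually_ge_atTop Y] with x hx k
      obtain ⟨h1, h2⟩ := hfbound x hx k
      rw [Real.norm_of_nonneg h1]; exact h2
    have hT := tendsto_tsum_of_dominated_convergence hbound hlim hdom
    have htsum : (∑' k : ℕ, w ^ k * ((l ^ (α - θ)) ^ (k+1) - (l ^ (α - θ)) ^ k))
        = (l ^ (α - θ) - 1) * (1 - l ^ (-θ))⁻¹ := by
      have hterm2 : ∀ k : ℕ, w ^ k * ((l ^ (α - θ)) ^ (k+1) - (l ^ (α - θ)) ^ k)
          = (l ^ (α - θ) - 1) * (l ^ (-θ)) ^ k := by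
        intro k
        have hρ : l ^ (-θ) = l ^ (α - θ) * w := by
          rw [hwdef, show (-θ) = (α - θ) - α by ring, Real.rpow_sub hl0, div_eq_mul_inv]
        rw [hρ, mul_pow]
        ring
      rw [tsum_congr hterm2, tsum_mul_left, tsum_geometric_of_lt_one hρ0 hρ1]
    rw [htsum] at hT
    -- E
    have hE : Tendsto (fun x => (l * Y) ^ α / (x ^ α * (1 - distF μ x))) atTop (𝓝 0) :=
      Tendsto.div_atTop tendsto_const_nhds (xaU_atTop hα hθ hθα hU)
    refine ⟨_, _, hT, hE, ?_⟩
    -- sandwich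
    filter_upwards [eventually_ge_atTop Y] with x hx
    have hx0 : (0:ℝ) < x := lt_of_lt_of_le hY0 hx
    have hUx : (0:ℝ) < 1 - distF μ x := (hfacts x hx).2
    have hxα : (0:ℝ) < x ^ α := Real.rpow_pos_of_pos hx0 α
    have hex : ∃ N : ℕ, x < Y * l ^ (N+1) := by
      obtain ⟨n, hn⟩ := pow_unbounded_of_one_lt (x / Y) hl1
      refine ⟨n, ?_⟩
      have h3 := (div_lt_iff₀ hY0).1 hn
      have h4 : (l:ℝ) ^ n * Y ≤ l ^ (n+1) * Y := by
        rw [pow_succ]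
        nlinarith [pow_pos hl0 n, hY0]
      nlinarith
    set N := Nat.find hex with hNdef
    have hNs : x < Y * l ^ (N+1) := Nat.find_spec hex
    have hNmin : ∀ k, k < N → Y * l ^ (k+1) ≤ x := by
      intro k hk
      exact not_lt.1 (Nat.find_min hex hk)
    have hzero : ∀ k ∉ Finset.range N, f x k = 0 := by
      intro k hk
      rw [Finset.mem_range, not_lt] at hk
      rw [hfdef]
      simp only
      rw [if_neg]
      push_neg
      calc x < Y * l ^ (N+1) := hNs
        _ ≤ Y * l ^ (k+1) := by
            have := pow_le_pow_right₀ hl1.le (by omega : N+1 ≤ k+1)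
            nlinarith
    have hfin : (∑' k : ℕ, f x k) = ∑ k ∈ Finset.range N, f x k := tsum_eq_sum hzero
    set SS := ∑ k ∈ Finset.range N, w ^ k *
      ((1 - distF μ (x / l ^ (k+1))) - (1 - distF μ (x / l ^ k))) with hSS
    have hfSS : (∑' k : ℕ, f x k) = SS / (1 - distF μ x) := by
      rw [hfin, hSS, Finset.sum_div]
      refine Finset.sum_congr rfl (fun k hk => ?_)
      rw [Finset.mem_range] at hk
      rw [hfdef]
      simp only [if_pos (hNmin k hk)]
      rw [mul_div_assoc]
    have hSSnn : 0 ≤ SS := by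
      refine Finset.sum_nonneg (fun k _ => ?_)
      exact mul_nonneg (le_of_lt (pow_pos hw0 k)) (hDnn x k hx0)
    -- telescoping identity
    have htel : ∑ k ∈ Finset.range N, (Htr μ α (x / l ^ k) - Htr μ α (x / l ^ (k+1)))
        = Htr μ α x - Htr μ α (x / l ^ N) := by
      have := Finset.sum_range_sub' (fun k => Htr μ α (x / l ^ k)) N
      simpa using this
    have hpow : ∀ m : ℕ, (x / l ^ m) ^ α = x ^ α * w ^ m := by
      intro m
      rw [Real.div_rpow hx0.le (le_of_lt (pow_pos hl0 m)), ← rpow_pow_comm hl0.le,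
        hwdef, inv_pow, div_eq_mul_inv]
    -- per-term squeeze
    have hsq : ∀ k ∈ Finset.range N,
        x ^ α * (w * (w ^ k * ((1 - distF μ (x / l ^ (k+1))) - (1 - distF μ (x / l ^ k)))))
          ≤ Htr μ α (x / l ^ k) - Htr μ α (x / l ^ (k+1)) ∧
        Htr μ α (x / l ^ k) - Htr μ α (x / l ^ (k+1))
          ≤ x ^ α * (w ^ k * ((1 - distF μ (x / l ^ (k+1))) - (1 - distF μ (x / l ^ k)))) := by
      intro k hk
      have hy0 : (0:ℝ) < x / l ^ (k+1) := div_pos hx0 (pow_pos hl0 _)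
      have hyz : x / l ^ (k+1) ≤ x / l ^ k := by
        apply div_le_div_of_nonneg_left hx0.le (pow_pos hl0 k)
        exact pow_le_pow_right₀ hl1.le (Nat.le_succ k)
      have h1 := squeeze_low hsupp hα hy0 hyz
      have h2 := squeeze_high hsupp hα hy0 hyz
      rw [hpow (k+1)] at h1
      rw [hpow k] at h2
      constructor
      · calc x ^ α * (w * (w ^ k * ((1 - distF μ (x / l ^ (k+1))) - (1 - distF μ (x / l ^ k)))))
            = x ^ α * w ^ (k+1) * ((1 - distF μ (x / l ^ (k+1))) - (1 - distF μ (x / l ^ k))) := by ring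
          _ ≤ _ := h1
      · calc Htr μ α (x / l ^ k) - Htr μ α (x / l ^ (k+1))
            ≤ x ^ α * w ^ k * ((1 - distF μ (x / l ^ (k+1))) - (1 - distF μ (x / l ^ k))) := h2
          _ = x ^ α * (w ^ k * ((1 - distF μ (x / l ^ (k+1))) - (1 - distF μ (x / l ^ k)))) := by ring
    constructor
    · -- lower bound : w * T ≤ Q
      have h1 : x ^ α * (w * SS) ≤ Htr μ α x := by
        have h2 : ∑ k ∈ Finset.range N,
            x ^ α * (w * (w ^ k * ((1 - distF μ (x / l ^ (k+1))) - (1 - distF μ (x / l ^ k)))))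
            ≤ ∑ k ∈ Finset.range N, (Htr μ α (x / l ^ k) - Htr μ α (x / l ^ (k+1))) :=
          Finset.sum_le_sum (fun k hk => (hsq k hk).1)
        rw [htel] at h2
        have h3 : 0 ≤ Htr μ α (x / l ^ N) := Htr_nonneg hsupp _
        have h4 : x ^ α * (w * SS) = ∑ k ∈ Finset.range N,
            x ^ α * (w * (w ^ k * ((1 - distF μ (x / l ^ (k+1))) - (1 - distF μ (x / l ^ k))))) := by
          rw [hSS, Finset.mul_sum, Finset.mul_sum]
        rw [h4]
        linarith
      have hden : (0:ℝ) < x ^ α * (1 - distF μ x) := mul_pos hxα hUx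
      have heq2 : (l ^ α)⁻¹ * (SS / (1 - distF μ x))
          = (x ^ α * (w * SS)) / (x ^ α * (1 - distF μ x)) := by
        rw [eq_div_iff (ne_of_gt hden), hwdef]
        field_simp
      rw [hfSS, heq2]
      exact div_le_div_of_nonneg_right h1 hden.le
    · -- upper bound : Q ≤ T + E
      have h1 : Htr μ α x ≤ x ^ α * SS + (l * Y) ^ α := by
        have h2 : ∑ k ∈ Finset.range N, (Htr μ α (x / l ^ k) - Htr μ α (x / l ^ (k+1)))
            ≤ ∑ k ∈ Finset.range N,
            x ^ α * (w ^ k * ((1 - distF μ (x / l ^ (k+1))) - (1 - distF μ (x / l ^ k)))) :=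
          Finset.sum_le_sum (fun k hk => (hsq k hk).2)
        rw [htel] at h2
        have h3 : Htr μ α (x / l ^ N) ≤ (l * Y) ^ α := by
          have hy0 : (0:ℝ) < x / l ^ N := div_pos hx0 (pow_pos hl0 _)
          have h4 := Htr_le hsupp hα hy0
          have h5 : x / l ^ N ≤ l * Y := by
            rw [div_le_iff₀ (pow_pos hl0 _)]
            calc x ≤ Y * l ^ (N+1) := hNs.le
              _ = l * Y * l ^ N := by ring
          exact le_trans h4 (Real.rpow_le_rpow hy0.le h5 hα.le)
        have h6 : x ^ α * SS = ∑ k ∈ Finset.range N,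
            x ^ α * (w ^ k * ((1 - distF μ (x / l ^ (k+1))) - (1 - distF μ (x / l ^ k)))) := by
          rw [hSS, Finset.mul_sum]
        rw [h6]
        linarith
      rw [hfSS]
      have hden : (0:ℝ) < x ^ α * (1 - distF μ x) := mul_pos hxα hUx
      rw [div_le_iff₀ hden]
      calc Htr μ α x ≤ x ^ α * SS + (l * Y) ^ α := h1
        _ = (SS / (1 - distF μ x) + (l * Y) ^ α / (x ^ α * (1 - distF μ x)))
            * (x ^ α * (1 - distF μ x)) := by
          field_simp
  -- conclude
  rw [tendsto_order]
  have hBlim : Tendsto (fun l : ℝ => (l ^ (α - θ) - 1) * (1 - l ^ (-θ))⁻¹)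
      (𝓝[>] (1:ℝ)) (𝓝 ((α - θ) / θ)) := by
    have h2 := tendsto_ratio_limit (show (0:ℝ) < α - θ by linarith) (show -θ < 0 by linarith)
    simpa [neg_neg] using h2
  constructor
  · intro b hb
    have hAl : Tendsto (fun l : ℝ => (l ^ α)⁻¹ * ((l ^ (α - θ) - 1) * (1 - l ^ (-θ))⁻¹))
        (𝓝[>] (1:ℝ)) (𝓝 ((α - θ) / θ)) := by
      have h1 : Tendsto (fun l : ℝ => (l ^ α)⁻¹) (𝓝[>] (1:ℝ)) (𝓝 1) := by
        have := (tendsto_rpow_one (c := α)).inv₀ one_ne_zero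
        simpa using this
      have := h1.mul hBlim
      rwa [one_mul] at this
    obtain ⟨l, hbl, hl1⟩ :=
      ((hAl.eventually (eventually_gt_nhds hb)).and eventually_mem_nhdsWithin).exists
    obtain ⟨T, E, hT, hE, hTE⟩ := key l hl1
    have hT2 : Tendsto (fun x => (l ^ α)⁻¹ * T x) atTop
        (𝓝 ((l ^ α)⁻¹ * ((l ^ (α - θ) - 1) * (1 - l ^ (-θ))⁻¹))) := hT.const_mul _
    filter_upwards [hT2.eventually (eventually_gt_nhds hbl), hTE] with x h1 h2
    exact lt_of_lt_of_le h1 h2.1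
  · intro b hb
    obtain ⟨l, hbl, hl1⟩ :=
      ((hBlim.eventually (eventually_lt_nhds hb)).and eventually_mem_nhdsWithin).exists
    obtain ⟨T, E, hT, hE, hTE⟩ := key l hl1
    have hT2 : Tendsto (fun x => T x + E x) atTop
        (𝓝 ((l ^ (α - θ) - 1) * (1 - l ^ (-θ))⁻¹)) := by
      have := hT.add hE
      simpa using this
    filter_upwards [hT2.eventually (eventually_lt_nhds hbl), hTE] with x h1 h2
    exact lt_of_le_of_lt h2.2 h1

end MainB

section Final
variable {μ : Measure ℝ} [IsProbabilityMeasure μ] (hsupp : μ (Iic 0) = 0) {α θ : ℝ}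
  (hα : 0 < α) (hθ : 0 < θ) (hθα : θ < α)

include hsupp hα hθ hθα in
lemma lemB (hU : RegVary (fun x => 1 - distF μ x) (θ - α)) :
    Tendsto (fun x => x ^ α * (1 - distF μ x) / Htr μ α x) atTop (𝓝 (θ / (α - θ))) := by
  have hQ := lemQ hsupp hα hθ hθα hU
  have hne : (α - θ) / θ ≠ 0 := ne_of_gt (div_pos (by linarith) hθ)
  have h2 := hQ.inv₀ hne
  rw [inv_div] at h2
  refine h2.congr (fun x => ?_)
  rw [inv_div]

include hsupp hα hθ hθα in
lemma transA (hH : RegVary (Htr μ α) θ) : RegVary (fun x => 1 - distF μ x) (θ - α) := by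
  have hR := lemA hsupp hα hθ hθα hH
  have hl0 : (0:ℝ) < θ / (α - θ) := div_pos hθ (by linarith)
  have hHpos := hH.eventually_pos (fun x => Htr_nonneg hsupp x)
  intro t ht
  have hmul : Tendsto (fun x : ℝ => t * x) atTop atTop :=
    Tendsto.const_mul_atTop ht tendsto_id
  have hRt : Tendsto (fun x => (t*x) ^ α * (1 - distF μ (t*x)) / Htr μ α (t*x)) atTop
      (𝓝 (θ / (α - θ))) := by
    simpa [Function.comp_def] using hR.comp hmul
  have hHt := hH t ht
  have hHtpos : ∀ᶠ x in atTop, 0 < Htr μ α (t * x) := hmul.eventually hHpos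
  have hUpos : ∀ᶠ x in atTop, 0 < 1 - distF μ x := by
    filter_upwards [hR.eventually (eventually_gt_nhds hl0), eventually_gt_atTop 0] with x h1 h3
    rcases eq_or_lt_of_le (U_nonneg (μ := μ) x) with h | h
    · exfalso
      rw [← h, mul_zero, zero_div] at h1
      exact lt_irrefl 0 h1
    · exact h
  have hfor : ∀ᶠ x in atTop, (1 - distF μ (t*x)) / (1 - distF μ x)
      = ((t*x) ^ α * (1 - distF μ (t*x)) / Htr μ α (t*x)) / (x ^ α * (1 - distF μ x) / Htr μ α x)
        * ((Htr μ α (t*x) / Htr μ α x) * (t ^ α)⁻¹) := by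
    filter_upwards [hHpos, hHtpos, hUpos, eventually_gt_atTop 0] with x h1 h2 h3 h4
    have hxα : (0:ℝ) < x ^ α := Real.rpow_pos_of_pos h4 α
    have htα : (0:ℝ) < t ^ α := Real.rpow_pos_of_pos ht α
    have hpow : (t*x) ^ α = t ^ α * x ^ α := Real.mul_rpow ht.le h4.le
    rw [hpow]
    field_simp
  have hTlim := (hRt.div hR (ne_of_gt hl0)).mul (hHt.mul (tendsto_const_nhds (x := (t ^ α)⁻¹)))
  have hval : θ / (α - θ) / (θ / (α - θ)) * (t ^ θ * (t ^ α)⁻¹) = t ^ (θ - α) := by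
    rw [div_self (ne_of_gt hl0), one_mul, ← div_eq_mul_inv, ← Real.rpow_sub ht]
  rw [hval] at hTlim
  exact hTlim.congr' (EventuallyEq.symm hfor)

include hsupp hα hθ hθα in
lemma transB (hU : RegVary (fun x => 1 - distF μ x) (θ - α)) : RegVary (Htr μ α) θ := by
  have hQ := lemQ hsupp hα hθ hθα hU
  have hq0 : (0:ℝ) < (α - θ) / θ := div_pos (by linarith) hθ
  have hUpos := hU.eventually_pos (fun x => U_nonneg x)
  intro t ht
  have hmul : Tendsto (fun x : ℝ => t * x) atTop atTop :=
    Tendsto.const_mul_atTop ht tendsto_id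
  have hQt : Tendsto (fun x => Htr μ α (t*x) / ((t*x) ^ α * (1 - distF μ (t*x)))) atTop
      (𝓝 ((α - θ) / θ)) := by
    simpa [Function.comp_def] using hQ.comp hmul
  have hUt := hU t ht
  have hUtpos : ∀ᶠ x in atTop, 0 < 1 - distF μ (t * x) := hmul.eventually hUpos
  have hHpos : ∀ᶠ x in atTop, 0 < Htr μ α x := by
    filter_upwards [hQ.eventually (eventually_gt_nhds hq0), hUpos, eventually_gt_atTop 0]
      with x h1 h2 h3
    have hxα : (0:ℝ) < x ^ α * (1 - distF μ x) :=
      mul_pos (Real.rpow_pos_of_pos h3 α) h2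
    rcases div_pos_iff.1 h1 with ⟨h4, -⟩ | ⟨-, h5⟩
    · exact h4
    · linarith
  have hfor : ∀ᶠ x in atTop, Htr μ α (t*x) / Htr μ α x
      = (Htr μ α (t*x) / ((t*x) ^ α * (1 - distF μ (t*x)))) / (Htr μ α x / (x ^ α * (1 - distF μ x)))
        * (((1 - distF μ (t*x)) / (1 - distF μ x)) * t ^ α) := by
    filter_upwards [hHpos, hUtpos, hUpos, eventually_gt_atTop 0] with x h1 h2 h3 h4
    have hxα : (0:ℝ) < x ^ α := Real.rpow_pos_of_pos h4 α
    have htα : (0:ℝ) < t ^ α := Real.rpow_pos_of_pos ht α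
    have hpow : (t*x) ^ α = t ^ α * x ^ α := Real.mul_rpow ht.le h4.le
    rw [hpow]
    field_simp
  have hTlim := (hQt.div hQ (ne_of_gt hq0)).mul (hUt.mul (tendsto_const_nhds (x := t ^ α)))
  have hval : (α - θ) / θ / ((α - θ) / θ) * (t ^ (θ - α) * t ^ α) = t ^ θ := by
    rw [div_self (ne_of_gt hq0), one_mul, ← Real.rpow_add ht]
    ring_nf
  rw [hval] at hTlim
  exact hTlim.congr' (EventuallyEq.symm hfor)

end Final


theorem stmt9 (μ : Measure ℝ) [IsProbabilityMeasure μ] (hsupp : μ (Iic 0) = 0)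
    (α θ : ℝ) (hα : 0 < α) (hθ : 0 < θ) (hθα : θ < α) :
    (RegVary (Htr μ α) θ ↔ RegVary (fun x => 1 - distF μ x) (θ - α)) ∧
      (RegVary (Htr μ α) θ →
        Tendsto (fun x => x ^ α * (1 - distF μ x) / Htr μ α x) atTop
          (𝓝 (θ / (α - θ)))) := by
  exact ⟨⟨transA hsupp hα hθ hθα, transB hsupp hα hθ hθα⟩,
    fun hH => lemA hsupp hα hθ hθα hH⟩
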